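/- Let g be an element of the symmetric group S_n with exactly k orbits on {1,...,n} (counting fixed points), let r be the size of one orbit of g with r ≥ n/k, write g = ρπ where ρ is the r-cycle on that orbit and π is the permutation induced by g on the remaining n−r points, and let λ be a partition of n. Then |χ_λ(g)| ≤ Σ_ν |χ_{λ∖ν}(π)|, where the sum is over all rim hooks ν of length r in Y_λ, and the number of summands is at most k. Here χ_λ denotes the irreducible character of S_n associated to λ. -/

import Mathlib

/-- The hook length of the cell `c = (i, j)` of a Young diagram `μ`, in 0-indexed
coordinates: `(μ.rowLen i − j) + (μ.colLen j − i) − 1`.  Cells of hook length `r` are in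
canonical bijection with rim hooks of length `r`. -/
def YoungDiagram.hookLen (μ : YoungDiagram) (c : ℕ × ℕ) : ℕ :=
  (μ.rowLen c.1 - c.2) + (μ.colLen c.2 - c.1) - 1

/-- The rim hook of a Young diagram `μ` at a cell `c = (i, j)`:
the set of cells `(a, b) ∈ μ` with `a ≥ i`, `b ≥ j` and `(a+1, b+1) ∉ μ`. -/
def YoungDiagram.rimHook (μ : YoungDiagram) (c : ℕ × ℕ) : Finset (ℕ × ℕ) :=
  μ.cells.filter (fun x => c.1 ≤ x.1 ∧ c.2 ≤ x.2 ∧ (x.1 + 1, x.2 + 1) ∉ μ.cells)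

/-- The leg length of the rim hook of `μ` at the cell `c = (i, j)`: one less than its
number of rows, i.e. `μ.colLen j − i − 1` in 0-indexed coordinates. -/
def YoungDiagram.legLen (μ : YoungDiagram) (c : ℕ × ℕ) : ℕ :=
  μ.colLen c.2 - c.1 - 1

open Finset


open Finset

/-- Distinct naturals: sum is at least 0+1+...+(card-1). -/
lemma aux_sum_range_le (B : Finset ℕ) : ∑ i ∈ Finset.range B.card, i ≤ ∑ b ∈ B, b := by
  induction B using Finset.strongInduction with
  | _ B ih =>
    rcases B.eq_empty_or_nonempty with rfl | hne
    · simp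
    · have hb : B.max' hne ∈ B := B.max'_mem hne
      have hsub : B ⊆ Finset.range (B.max' hne + 1) := by
        intro a ha
        exact Finset.mem_range.mpr (Nat.lt_succ_of_le (B.le_max' a ha))
      have hcardle : B.card ≤ B.max' hne + 1 := by
        simpa using Finset.card_le_card hsub
      have hcpos : 0 < B.card := Finset.card_pos.mpr hne
      have h1 := ih (B.erase (B.max' hne)) (Finset.erase_ssubset hb)
      have hce : (B.erase (B.max' hne)).card = B.card - 1 := Finset.card_erase_of_mem hb
      have hsum : B.max' hne + ∑ b ∈ B.erase (B.max' hne), b = ∑ b ∈ B, b :=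
        Finset.add_sum_erase _ id hb
      have h2 : ∑ i ∈ Finset.range B.card, i
          = ∑ i ∈ Finset.range (B.card - 1), i + (B.card - 1) := by
        conv_lhs => rw [show B.card = (B.card - 1) + 1 by omega]
        rw [Finset.sum_range_succ]
      rw [hce] at h1
      omega

/-- Abacus lemma: `r` times the number of beads that can be moved down by `r`
is at most the total displacement of the bead configuration. -/
lemma aux_abacus (r : ℕ) (hr : 1 ≤ r) :
    ∀ s (B : Finset ℕ), (∑ b ∈ B, b) = s →
      r * (B.filter (fun b => r ≤ b ∧ b - r ∉ B)).card + ∑ i ∈ Finset.range B.card, i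
        ≤ ∑ b ∈ B, b := by
  intro s
  induction s using Nat.strong_induction_on with
  | _ s ih =>
    intro B hs
    rcases (B.filter (fun b => r ≤ b ∧ b - r ∉ B)).eq_empty_or_nonempty with he | ⟨b, hbM⟩
    · rw [he]
      simpa using aux_sum_range_le B
    · obtain ⟨hb, hrb, hnb⟩ := Finset.mem_filter.mp hbM
      set B' := insert (b - r) (B.erase b) with hB'
      have hbr_ne : b - r ∉ B.erase b := fun h => hnb (Finset.mem_of_mem_erase h)
      have hcpos : 0 < B.card := Finset.card_pos.mpr ⟨b, hb⟩
      have hcard' : B'.card = B.card := by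
        rw [hB', Finset.card_insert_of_notMem hbr_ne, Finset.card_erase_of_mem hb]
        omega
      have hsumE : b + ∑ x ∈ B.erase b, x = ∑ x ∈ B, x := Finset.add_sum_erase _ id hb
      have hsum' : ∑ x ∈ B', x + r = ∑ x ∈ B, x := by
        rw [hB', Finset.sum_insert hbr_ne]
        omega
      have hlt : ∑ x ∈ B', x < s := by omega
      have hsub : (B.filter (fun x => r ≤ x ∧ x - r ∉ B)).erase b
          ⊆ B'.filter (fun x => r ≤ x ∧ x - r ∉ B') := by
        intro a ha
        have h1 := Finset.mem_erase.mp ha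
        have h2 := Finset.mem_filter.mp h1.2
        obtain ⟨hane, haB, hra, hnra⟩ : a ≠ b ∧ a ∈ B ∧ r ≤ a ∧ a - r ∉ B :=
          ⟨h1.1, h2.1, h2.2.1, h2.2.2⟩
        refine Finset.mem_filter.mpr ⟨?_, hra, ?_⟩
        · exact Finset.mem_insert_of_mem (Finset.mem_erase.mpr ⟨hane, haB⟩)
        · intro hmem
          rcases Finset.mem_insert.mp hmem with h | h
          · exact hane (by omega)
          · exact hnra (Finset.mem_of_mem_erase h)
      have hMcard : (B.filter (fun x => r ≤ x ∧ x - r ∉ B)).card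
          ≤ (B'.filter (fun x => r ≤ x ∧ x - r ∉ B')).card + 1 := by
        have h1 : (B.filter (fun x => r ≤ x ∧ x - r ∉ B)).card
            ≤ ((B.filter (fun x => r ≤ x ∧ x - r ∉ B)).erase b).card + 1 := by
          have := Finset.card_erase_of_mem hbM
          have : 0 < (B.filter (fun x => r ≤ x ∧ x - r ∉ B)).card :=
            Finset.card_pos.mpr ⟨b, hbM⟩
          omega
        exact h1.trans (by
          have := Finset.card_le_card hsub
          omega)
      have hIH := ih _ hlt B' rfl
      rw [hcard'] at hIH
      have h2 : r * (B.filter (fun x => r ≤ x ∧ x - r ∉ B)).card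
          ≤ r * (B'.filter (fun x => r ≤ x ∧ x - r ∉ B')).card + r := by
        calc r * (B.filter (fun x => r ≤ x ∧ x - r ∉ B)).card
            ≤ r * ((B'.filter (fun x => r ≤ x ∧ x - r ∉ B')).card + 1) :=
              Nat.mul_le_mul_left r hMcard
          _ = _ := by ring
      omega


/-- The number of cells of a Young diagram is the sum of its row lengths. -/
lemma aux_card_eq_sum (μ : YoungDiagram) :
    μ.card = ∑ i ∈ Finset.range (μ.colLen 0), μ.rowLen i := by
  have hcells : μ.cells = (Finset.range (μ.colLen 0)).biUnion (fun i => μ.row i) := by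
    ext c
    simp only [Finset.mem_biUnion, Finset.mem_range, YoungDiagram.mem_row_iff,
      YoungDiagram.mem_cells]
    constructor
    · intro hc
      refine ⟨c.1, ?_, hc, rfl⟩
      have h1 : (c.1, c.2) ∈ μ := hc
      have h2 : c.1 < μ.colLen c.2 := YoungDiagram.mem_iff_lt_colLen.mp h1
      exact h2.trans_le (μ.colLen_anti 0 c.2 (Nat.zero_le _))
    · rintro ⟨i, _, hc, rfl⟩
      exact hc
  have hdisj : ∀ i1 ∈ Finset.range (μ.colLen 0), ∀ i2 ∈ Finset.range (μ.colLen 0),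
      i1 ≠ i2 → Disjoint (μ.row i1) (μ.row i2) := by
    intro i1 _ i2 _ hne
    refine Finset.disjoint_left.mpr fun c h1 h2 => hne ?_
    rw [YoungDiagram.mem_row_iff] at h1 h2
    omega
  rw [YoungDiagram.card, hcells, Finset.card_biUnion hdisj]
  exact Finset.sum_congr rfl fun i _ => (μ.rowLen_eq_card).symm

lemma aux_hook_bound (μ : YoungDiagram) (r : ℕ) (hr : 1 ≤ r) :
    r * (μ.cells.filter (fun c => μ.hookLen c = r)).card ≤ μ.card := by
  set N := μ.colLen 0 with hN
  set β : ℕ → ℕ := fun i => μ.rowLen i + (N - 1 - i) with hβdef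
  set x : ℕ → ℕ := fun j => j + (N - μ.colLen j) with hxdef
  set B : Finset ℕ := (Finset.range N).image β with hB
  have hcolN : ∀ j, μ.colLen j ≤ N := fun j => μ.colLen_anti 0 j (Nat.zero_le _)
  -- β is injective on range N
  have hβlt : ∀ i1 i2 : ℕ, i1 < i2 → i2 < N → β i2 < β i1 := by
    intro i1 i2 h12 h2N
    have := μ.rowLen_anti i1 i2 (le_of_lt h12)
    simp only [hβdef]
    omega
  have hβinj : ∀ i1 i2 : ℕ, i1 < N → i2 < N → β i1 = β i2 → i1 = i2 := by
    intro i1 i2 h1 h2 he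
    rcases lt_trichotomy i1 i2 with h | h | h
    · exact absurd he (by have := hβlt i1 i2 h h2; omega)
    · exact h
    · exact absurd he (by have := hβlt i2 i1 h h1; omega)
  -- x is strictly monotone
  have hxmono : StrictMono x := by
    apply strictMono_nat_of_lt_succ
    intro j
    have h1 := μ.colLen_anti j (j + 1) (by omega)
    have h2 := hcolN j
    simp only [hxdef]
    omega
  -- β values and x values are disjoint
  have hdisj : ∀ i, i < N → ∀ j, β i ≠ x j := by
    intro i hi j
    by_cases hmem : (i, j) ∈ μ
    · have h1 := YoungDiagram.mem_iff_lt_rowLen.mp hmem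
      have h2 := YoungDiagram.mem_iff_lt_colLen.mp hmem
      have h3 := hcolN j
      simp only [hβdef, hxdef]
      omega
    · have h1 : μ.rowLen i ≤ j := by
        by_contra h
        exact hmem (YoungDiagram.mem_iff_lt_rowLen.mpr (by omega))
      have h2 : μ.colLen j ≤ i := by
        by_contra h
        exact hmem (YoungDiagram.mem_iff_lt_colLen.mpr (by omega))
      have h3 := hcolN j
      simp only [hβdef, hxdef]
      omega
  have hxnotB : ∀ j, x j ∉ B := by
    intro j hj
    rw [hB, Finset.mem_image] at hj
    obtain ⟨i, hi, he⟩ := hj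
    exact hdisj i (Finset.mem_range.mp hi) j he
  -- key identity: β i = x j + hookLen for cells
  have hβx : ∀ i j : ℕ, (i, j) ∈ μ → β i = x j + μ.hookLen (i, j) := by
    intro i j hmem
    have h1 := YoungDiagram.mem_iff_lt_rowLen.mp hmem
    have h2 := YoungDiagram.mem_iff_lt_colLen.mp hmem
    have h3 := hcolN j
    simp only [hβdef, hxdef, YoungDiagram.hookLen]
    omega
  -- every value not in B is an x value
  have hsurj : ∀ v, v ∉ B → ∃ j, x j = v := by
    intro v hv
    have hx0 : x 0 = 0 := by simp [hxdef, ← hN]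
    have hxge : ∀ j, j ≤ x j := fun j => Nat.le_add_right _ _
    have h0T : (0 : ℕ) ∈ (Finset.range (v + 1)).filter (fun j => x j ≤ v) :=
      Finset.mem_filter.mpr ⟨Finset.mem_range.mpr (by omega), by omega⟩
    set T := (Finset.range (v + 1)).filter (fun j => x j ≤ v) with hT
    set j := T.max' ⟨0, h0T⟩ with hj
    have hjT : j ∈ T := T.max'_mem _
    have hxj : x j ≤ v := (Finset.mem_filter.mp hjT).2
    have hj1 : v < x (j + 1) := by
      by_contra h
      push_neg at h
      have hmem : j + 1 ∈ T := Finset.mem_filter.mpr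
        ⟨Finset.mem_range.mpr (by have := hxge (j + 1); omega), h⟩
      have := T.le_max' _ hmem
      omega
    rcases eq_or_lt_of_le hxj with he | hlt
    · exact ⟨j, he⟩
    · exfalso
      apply hv
      have hcj := hcolN j
      have hcj1 := hcolN (j + 1)
      have hmono := μ.colLen_anti j (j + 1) (by omega)
      have hxjv : j + (N - μ.colLen j) < v := hlt
      have hxj1v : v < (j + 1) + (N - μ.colLen (j + 1)) := hj1
      set i := j + N - v with hi
      have hiN : i < μ.colLen j := by omega
      have hige : μ.colLen (j + 1) ≤ i := by omega
      have hrow1 : j < μ.rowLen i := YoungDiagram.mem_iff_lt_rowLen.mp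
        (YoungDiagram.mem_iff_lt_colLen.mpr hiN)
      have hrow2 : μ.rowLen i ≤ j + 1 := by
        by_contra h
        have : (i, j + 1) ∈ μ := YoungDiagram.mem_iff_lt_rowLen.mpr (by omega)
        have := YoungDiagram.mem_iff_lt_colLen.mp this
        omega
      rw [hB, Finset.mem_image]
      refine ⟨i, Finset.mem_range.mpr (by omega), ?_⟩
      simp only [hβdef]
      omega
  -- the bridge: number of hook-r cells equals number of movable beads
  have hbridge : (μ.cells.filter (fun c => μ.hookLen c = r)).card
      = (B.filter (fun b => r ≤ b ∧ b - r ∉ B)).card := by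
    apply Finset.card_bij (fun c _ => β c.1)
    · intro c hc
      obtain ⟨hc1, hc2⟩ := Finset.mem_filter.mp hc
      have hcμ : (c.1, c.2) ∈ μ := (YoungDiagram.mem_cells _).mp hc1
      have hc1N : c.1 < N := (YoungDiagram.mem_iff_lt_colLen.mp hcμ).trans_le (hcolN c.2)
      have hkey : β c.1 = x c.2 + r := by
        have := hβx c.1 c.2 hcμ
        rw [show ((c.1, c.2) : ℕ × ℕ) = c from rfl] at this
        omega
      refine Finset.mem_filter.mpr ⟨?_, by omega, ?_⟩
      · exact Finset.mem_image.mpr ⟨c.1, Finset.mem_range.mpr hc1N, rfl⟩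
      · have : β c.1 - r = x c.2 := by omega
        rw [this]
        exact hxnotB c.2
    · intro c1 h1 c2 h2 he
      obtain ⟨h11, h12⟩ := Finset.mem_filter.mp h1
      obtain ⟨h21, h22⟩ := Finset.mem_filter.mp h2
      have hcμ1 : (c1.1, c1.2) ∈ μ := (YoungDiagram.mem_cells _).mp h11
      have hcμ2 : (c2.1, c2.2) ∈ μ := (YoungDiagram.mem_cells _).mp h21
      have hN1 : c1.1 < N := (YoungDiagram.mem_iff_lt_colLen.mp hcμ1).trans_le (hcolN c1.2)
      have hN2 : c2.1 < N := (YoungDiagram.mem_iff_lt_colLen.mp hcμ2).trans_le (hcolN c2.2)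
      have he1 : c1.1 = c2.1 := hβinj _ _ hN1 hN2 he
      have hk1 : β c1.1 = x c1.2 + r := by
        have := hβx c1.1 c1.2 hcμ1
        rw [show ((c1.1, c1.2) : ℕ × ℕ) = c1 from rfl] at this
        omega
      have hk2 : β c2.1 = x c2.2 + r := by
        have := hβx c2.1 c2.2 hcμ2
        rw [show ((c2.1, c2.2) : ℕ × ℕ) = c2 from rfl] at this
        omega
      have : x c1.2 = x c2.2 := by omega
      have he2 : c1.2 = c2.2 := hxmono.injective this
      exact Prod.ext he1 he2
    · intro b hb
      obtain ⟨hbB, hrb, hnb⟩ := Finset.mem_filter.mp hb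
      obtain ⟨i, hiN', hβi⟩ := Finset.mem_image.mp hbB
      have hiN : i < N := Finset.mem_range.mp hiN'
      obtain ⟨j, hxj⟩ := hsurj (b - r) hnb
      have hβiv : μ.rowLen i + (N - 1 - i) = b := hβi
      have hxjv : j + (N - μ.colLen j) = b - r := hxj
      have hjrow : j < μ.rowLen i := by
        by_contra h
        push_neg at h
        have hcol : μ.colLen j ≤ i := by
          by_contra h2
          have : (i, j) ∈ μ := YoungDiagram.mem_iff_lt_colLen.mpr (by omega)
          have := YoungDiagram.mem_iff_lt_rowLen.mp this
          omega
        have := hcolN j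
        omega
      have hmem : (i, j) ∈ μ := YoungDiagram.mem_iff_lt_rowLen.mpr hjrow
      have hhook : μ.hookLen (i, j) = r := by
        have h1 := hβx i j hmem
        omega
      refine ⟨(i, j), Finset.mem_filter.mpr ⟨(YoungDiagram.mem_cells _).mpr hmem, hhook⟩, hβi⟩
  -- assemble
  have hBcard : B.card = N := by
    rw [hB, Finset.card_image_of_injOn, Finset.card_range]
    intro i1 h1 i2 h2
    exact hβinj i1 i2 (Finset.mem_range.mp h1) (Finset.mem_range.mp h2)
  have hBsum : ∑ b ∈ B, b = μ.card + ∑ i ∈ Finset.range N, i := by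
    rw [hB, Finset.sum_image (fun i1 h1 i2 h2 =>
      hβinj i1 i2 (Finset.mem_range.mp h1) (Finset.mem_range.mp h2))]
    have h1 : ∑ i ∈ Finset.range N, β i
        = ∑ i ∈ Finset.range N, μ.rowLen i + ∑ i ∈ Finset.range N, (N - 1 - i) := by
      rw [← Finset.sum_add_distrib]
    have h2 : ∑ i ∈ Finset.range N, (N - 1 - i) = ∑ i ∈ Finset.range N, i :=
      Finset.sum_range_reflect (fun i => i) N
    rw [h1, h2, ← aux_card_eq_sum μ]
  have hkey := aux_abacus r hr (∑ b ∈ B, b) B rfl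
  rw [hBcard, hBsum, ← hbridge] at hkey
  omega


/-- **The inductive step in the proof of the main theorem.**
Let `χ` assign to each partition `λ` (encoded as a Young diagram) the corresponding
irreducible character `χ_λ` of the symmetric group on any finite set whose cardinality is
the size of `λ`; the characterizing property used here is the Murnaghan–Nakayama rule
(hypothesis `hMN`): whenever `ρ` is a cycle on an `s`-element subset `O` fixing its
complement and `π` fixes `O` pointwise, `χ_λ(ρπ) = Σ_ν (−1)^{l(ν)} χ_{λ∖ν}(π)`, the sum
over rim hooks `ν` of length `s` of `λ` (indexed by the cells of hook length `s`, with
`λ∖ν` provided by a map `f` assigning to each such cell the diagram with the rim hook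
removed).

Now let `g ∈ Sₙ` have exactly `k` orbits, let `O` be an orbit of `g` of size `r ≥ n/k`,
and write `g = ρπ` where `ρ` is the `r`-cycle on `O` and `π` is the permutation induced
by `g` on the remaining `n − r` points.  Then for any partition `λ` of `n` (encoded as
the Young diagram `μ`), `|χ_λ(g)| ≤ Σ_ν |χ_{λ∖ν}(π)|`, the sum over rim hooks `ν` of
length `r` of `λ`, and the number of summands is at most `k`. -/
theorem abs_character_le_sum_of_murnaghan_nakayama
    (χ : YoungDiagram → ∀ (α : Type) [Fintype α] [DecidableEq α], Equiv.Perm α → ℂ)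
    (hMN : ∀ (ν : YoungDiagram) (α : Type) [Fintype α] [DecidableEq α],
      Fintype.card α = ν.card →
      ∀ (ρ πp : Equiv.Perm α) (O : Finset α) (s : ℕ), 1 ≤ s → O.card = s →
        ρ.IsCycleOn ↑O → (∀ x ∉ O, ρ x = x) → (∀ x ∈ O, πp x = x) →
        ∀ (hπO : ∀ x : α, x ∉ O ↔ πp x ∉ O)
          (f : ℕ × ℕ → YoungDiagram),
          (∀ c ∈ ν.cells.filter (fun c => ν.hookLen c = s),
            (f c).cells = ν.cells \ ν.rimHook c) →
          χ ν α (ρ * πp) =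
            ∑ c ∈ ν.cells.filter (fun c => ν.hookLen c = s),
              (-1 : ℂ) ^ ν.legLen c *
                χ (f c) {x : α // x ∉ O} (πp.subtypePerm (fun x => (hπO x).symm)))
    (n k r : ℕ) (hk : 1 ≤ k) (hkn : k ≤ n)
    (μ : YoungDiagram) (hμ : μ.card = n)
    (g ρ πp : Equiv.Perm (Fin n))
    (hg : Nat.card (MulAction.orbitRel.Quotient (Subgroup.zpowers g) (Fin n)) = k)
    (O : Finset (Fin n))
    (hO : ∃ x : Fin n, (O : Set (Fin n)) = MulAction.orbit (Subgroup.zpowers g) x)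
    (hOr : O.card = r) (hrk : n ≤ r * k)
    (hgρπ : g = ρ * πp)
    (hρ : ρ.IsCycleOn ↑O) (hρ' : ∀ x ∉ O, ρ x = x) (hπ : ∀ x ∈ O, πp x = x)
    (hπO : ∀ x : Fin n, x ∉ O ↔ πp x ∉ O)
    (f : ℕ × ℕ → YoungDiagram)
    (hf : ∀ c ∈ μ.cells.filter (fun c => μ.hookLen c = r),
      (f c).cells = μ.cells \ μ.rimHook c) :
    ‖χ μ (Fin n) g‖ ≤
        ∑ c ∈ μ.cells.filter (fun c => μ.hookLen c = r),
          ‖χ (f c) {x : Fin n // x ∉ O} (πp.subtypePerm (fun x => (hπO x).symm))‖ ∧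
      (μ.cells.filter (fun c => μ.hookLen c = r)).card ≤ k := by
  -- r is positive since O is a nonempty orbit
  have hr1 : 1 ≤ r := by
    obtain ⟨x, hx⟩ := hO
    have hxO : x ∈ O := by
      rw [← Finset.mem_coe, hx]
      exact MulAction.mem_orbit_self x
    have : 0 < O.card := Finset.card_pos.mpr ⟨x, hxO⟩
    omega
  have hcard : Fintype.card (Fin n) = μ.card := by simp [hμ]
  have hsum := hMN μ (Fin n) hcard ρ πp O r hr1 hOr hρ hρ' hπ hπO f hf
  constructor
  · rw [hgρπ, hsum]
    refine le_trans (norm_sum_le _ _) (le_of_eq ?_)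
    refine Finset.sum_congr rfl fun c _ => ?_
    simp [map_mul, map_pow]
  · have hb := aux_hook_bound μ r hr1
    rw [hμ] at hb
    have : r * (μ.cells.filter (fun c => μ.hookLen c = r)).card ≤ r * k := hb.trans hrk
    exact Nat.le_of_mul_le_mul_left this (by omega)
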